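/- arXiv:1904.05809 — 3 statements merged into one kernel-verified Lean document; each statement's English description precedes it below -/
import Mathlib

section
/- Let R be a commutative ring, A a commutative R-algebra, and L an A-module carrying an almost Lie–Rinehart structure with bracket ⁅·,·⁆ and anchor ρ. Then the Jacobiator Jac(x,y,z) := ⁅x,⁅y,z⁆⁆ + ⁅y,⁅z,x⁆⁆ + ⁅z,⁅x,y⁆⁆ is A-linear in each of its three arguments: Jac(a•x, y, z) = a•Jac(x,y,z), Jac(x, a•y, z) = a•Jac(x,y,z), and Jac(x, y, a•z) = a•Jac(x,y,z) for all a ∈ A and x,y,z ∈ L. -/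
/-- The Jacobiator of an `R`-bilinear bracket. -/
def jacobiator {R L : Type*} [CommRing R] [AddCommGroup L] [Module R L]
    (b : L →ₗ[R] L →ₗ[R] L) (x y z : L) : L :=
  b x (b y z) + b y (b z x) + b z (b x y)

/-- For an almost Lie–Rinehart structure, the Jacobiator is `A`-linear in each
of its three arguments. -/
theorem jacobiator_A_linear
    {R A L : Type*} [CommRing R] [CommRing A] [Algebra R A]
    [AddCommGroup L] [Module R L] [Module A L] [IsScalarTower R A L]
    (b : L →ₗ[R] L →ₗ[R] L)
    (alt : ∀ x : L, b x x = 0)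
    (ρ : L →ₗ[A] Derivation R A A)
    (anchor_bracket : ∀ x y : L, ρ (b x y) = ⁅ρ x, ρ y⁆)
    (leibniz : ∀ (x y : L) (a : A), b x (a • y) = a • b x y + (ρ x a) • y) :
    ∀ (a : A) (x y z : L),
      jacobiator b (a • x) y z = a • jacobiator b x y z ∧
      jacobiator b x (a • y) z = a • jacobiator b x y z ∧
      jacobiator b x y (a • z) = a • jacobiator b x y z := by
  have skew : ∀ x y : L, b x y = - b y x := by
    intro x y
    have h := alt (x + y)
    simp only [map_add, LinearMap.add_apply, alt, zero_add, add_zero] at h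
    exact eq_neg_of_add_eq_zero_right h
  have leib1 : ∀ (x y : L) (a : A), b (a • x) y = a • b x y - (ρ y a) • x := by
    intro x y a
    rw [skew (a • x) y, leibniz, skew y x]
    module
  have cyc : ∀ x y z : L, jacobiator b x y z = jacobiator b y z x := by
    intro x y z
    unfold jacobiator
    abel
  have key : ∀ (a : A) (x y z : L),
      jacobiator b x y (a • z) = a • jacobiator b x y z := by
    intro a x y z
    unfold jacobiator
    rw [leibniz y z a, map_add, leibniz x, leibniz x, leib1 z x a, map_sub,
      leibniz y, leibniz y, leib1 z (b x y) a, anchor_bracket,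
      Derivation.commutator_apply, skew z x, map_neg]
    module
  intro a x y z
  refine ⟨?_, ?_, key a x y z⟩
  · calc jacobiator b (a • x) y z = jacobiator b y z (a • x) := by
          rw [cyc (a • x) y z, cyc y z (a • x)]
      _ = a • jacobiator b y z x := key a y z x
      _ = a • jacobiator b x y z := by rw [cyc x y z]
  · calc jacobiator b x (a • y) z = jacobiator b z x (a • y) := by
          rw [cyc x (a • y) z, cyc (a • y) z x]
      _ = a • jacobiator b z x y := key a z x y
      _ = a • jacobiator b x y z := by rw [cyc x y z, cyc y z x]
end

section
/- Let R be a commutative ring, A a commutative R-algebra, and L an A-module with an R-bilinear alternating bracket ⁅·,·⁆ and an A-linear anchor ρ : L → Der(A) satisfying only the Leibniz rule ⁅x, a•y⁆ = a•⁅x,y⁆ + (ρ x a)•y (the anchor is NOT assumed to be a morphism of brackets). Then for all x,y,z ∈ L and a ∈ A the following exact expansion of the Jacobiator holds: Jac(x, y, a•z) = a•Jac(x,y,z) + ((⁅ρ x, ρ y⁆ − ρ⁅x,y⁆) a)•z, where ⁅ρ x, ρ y⁆ is the commutator of derivations. -/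
/-- Exact expansion of the Jacobiator in the last argument, assuming only the
Leibniz rule (the anchor is *not* assumed to be a morphism of brackets):
`Jac(x, y, a•z) = a•Jac(x,y,z) + ((⁅ρ x, ρ y⁆ − ρ⁅x,y⁆) a)•z`. -/
theorem jacobiator_smul_expansion
    {R A L : Type*} [CommRing R] [CommRing A] [Algebra R A]
    [AddCommGroup L] [Module R L] [Module A L] [IsScalarTower R A L]
    (b : L →ₗ[R] L →ₗ[R] L)
    (alt : ∀ x : L, b x x = 0)
    (ρ : L →ₗ[A] Derivation R A A)
    (leibniz : ∀ (x y : L) (a : A), b x (a • y) = a • b x y + (ρ x a) • y) :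
    ∀ (x y z : L) (a : A),
      jacobiator b x y (a • z) =
        a • jacobiator b x y z + ((⁅ρ x, ρ y⁆ - ρ (b x y)) a) • z := by
  have skew : ∀ x y : L, b x y = - b y x := by
    intro x y
    have h := alt (x + y)
    simp only [map_add, LinearMap.add_apply, alt] at h
    have h2 : b x y + b y x = 0 := by rw [← h]; abel
    exact eq_neg_of_add_eq_zero_left h2
  intro x y z a
  have h1 : b x (b y (a • z)) = a • b x (b y z) + (ρ x a) • b y z
      + (ρ y a) • b x z + (ρ x ((ρ y) a)) • z := by
    rw [leibniz y z a, map_add, leibniz x (b y z) a, leibniz x z (ρ y a)]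
    module
  have h2 : b y (b (a • z) x) = a • b y (b z x) + (ρ y a) • b z x
      - (ρ x a) • b y z - (ρ y ((ρ x) a)) • z := by
    have inner : b (a • z) x = a • b z x - (ρ x a) • z := by
      rw [skew (a • z) x, leibniz x z a, skew x z]; module
    rw [inner, map_sub, leibniz y (b z x) a, leibniz y z (ρ x a)]
    module
  have h3 : b (a • z) (b x y) = a • b z (b x y) - (ρ (b x y) a) • z := by
    rw [skew (a • z) (b x y), leibniz, skew z (b x y)]
    module
  simp only [jacobiator, h1, h2, h3, Derivation.commutator_apply,
    LieHom.lie_apply]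
  rw [skew z x]
  simp only [sub_smul, Derivation.sub_apply, Derivation.commutator_apply]
  module
end

section
/- Let R be a commutative ring, A a commutative R-algebra, and L an A-module carrying an almost Lie–Rinehart structure with bracket ⁅·,·⁆ and anchor ρ. Let N ⊆ L be an A-submodule such that ⁅x, n⁆ ∈ N for every x ∈ L and n ∈ N, such that N ⊆ ker ρ, and such that Jac(x,y,z) ∈ N for all x,y,z ∈ L, where Jac(x,y,z) := ⁅x,⁅y,z⁆⁆ + ⁅y,⁅z,x⁆⁆ + ⁅z,⁅x,y⁆⁆. Then the quotient L ⧸ N inherits a Lie–Rinehart structure: the induced bracket (given on classes by ⁅x̄, ȳ⁆ = class of ⁅x,y⁆) is R-bilinear, alternating, and satisfies the Jacobi identity; the anchor descends to an A-linear map ρ̄ : L ⧸ N → Der(A) with ρ̄(x̄) = ρ(x); and ρ̄ is a morphism of brackets and satisfies the Leibniz rule ⁅x̄, a•ȳ⁆ = a•⁅x̄,ȳ⁆ + (ρ̄ x̄ a)•ȳ. -/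
/-- If an `A`-submodule `N` of an almost Lie–Rinehart algebra `L` is stable
under bracketing, contained in the kernel of the anchor, and contains all
Jacobiators (a "Jacobi ideal"), then the quotient `L ⧸ N` inherits a
Lie–Rinehart structure: an `R`-bilinear alternating bracket satisfying the
Jacobi identity, together with a descended `A`-linear anchor which is a
morphism of brackets and satisfies the Leibniz rule. -/
theorem quotient_by_jacobi_ideal_is_LieRinehart
    {R A L : Type*} [CommRing R] [CommRing A] [Algebra R A]
    [AddCommGroup L] [Module R L] [Module A L] [IsScalarTower R A L]
    (b : L →ₗ[R] L →ₗ[R] L)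
    (alt : ∀ x : L, b x x = 0)
    (ρ : L →ₗ[A] Derivation R A A)
    (anchor_bracket : ∀ x y : L, ρ (b x y) = ⁅ρ x, ρ y⁆)
    (leibniz : ∀ (x y : L) (a : A), b x (a • y) = a • b x y + (ρ x a) • y)
    (N : Submodule A L)
    (N_stable : ∀ x : L, ∀ n ∈ N, b x n ∈ N)
    (N_ker : ∀ n ∈ N, ρ n = 0)
    (N_jac : ∀ x y z : L, jacobiator b x y z ∈ N) :
    ∃ (bq : (L ⧸ N) →ₗ[R] (L ⧸ N) →ₗ[R] (L ⧸ N))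
      (ρq : (L ⧸ N) →ₗ[A] Derivation R A A),
      (∀ x y : L,
        bq (Submodule.Quotient.mk x) (Submodule.Quotient.mk y) =
          Submodule.Quotient.mk (b x y)) ∧
      (∀ u : L ⧸ N, bq u u = 0) ∧
      (∀ u v w : L ⧸ N, bq u (bq v w) + bq v (bq w u) + bq w (bq u v) = 0) ∧
      (∀ x : L, ρq (Submodule.Quotient.mk x) = ρ x) ∧
      (∀ u v : L ⧸ N, ρq (bq u v) = ⁅ρq u, ρq v⁆) ∧
      (∀ (u v : L ⧸ N) (a : A), bq u (a • v) = a • bq u v + (ρq u a) • v) := by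
  have antisym : ∀ x y : L, b y x = - b x y := by
    intro x y
    have h := alt (x + y)
    simp only [map_add, LinearMap.add_apply, alt x, alt y, zero_add, add_zero] at h
    rw [eq_neg_iff_add_eq_zero]
    exact h
  have N_stable' : ∀ n ∈ N, ∀ x : L, b n x ∈ N := by
    intro n hn x
    rw [antisym]
    exact N.neg_mem (N_stable x n hn)
  set N' := N.restrictScalars R with hN'
  -- quotient bracket
  have hmap : ∀ x : L, N' ≤ N'.comap (b x) := fun x n hn => N_stable x n hn
  let f : L →ₗ[R] (L ⧸ N') →ₗ[R] (L ⧸ N') :=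
    { toFun := fun x => Submodule.mapQ N' N' (b x) (hmap x)
      map_add' := by
        intro x y
        ext u
        simp only [LinearMap.comp_apply, LinearMap.add_apply, Submodule.mkQ_apply,
          Submodule.mapQ_apply, map_add, Submodule.Quotient.mk_add]
      map_smul' := by
        intro r x
        ext u
        simp only [LinearMap.comp_apply, LinearMap.smul_apply, Submodule.mkQ_apply,
          Submodule.mapQ_apply, map_smul, Submodule.Quotient.mk_smul, RingHom.id_apply] }
  have hf : ∀ x y : L, f x (Submodule.Quotient.mk y) = Submodule.Quotient.mk (b x y) :=
    fun x y => rfl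
  have hker : ∀ n ∈ N', f n = 0 := by
    intro n hn
    ext w
    simp only [LinearMap.comp_apply, Submodule.mkQ_apply, LinearMap.zero_comp,
      LinearMap.zero_apply]
    show Submodule.mapQ N' N' (b n) (hmap n) (Submodule.Quotient.mk w) = 0
    rw [Submodule.mapQ_apply]
    exact (Submodule.Quotient.mk_eq_zero N').2 (N_stable' n hn w)
  refine ⟨Submodule.liftQ N' f (fun n hn => ?_),
    Submodule.liftQ N ρ (fun n hn => ?_), ?_, ?_, ?_, ?_, ?_, ?_⟩
  · exact hker n hn
  · exact N_ker n hn
  · intro x y; rfl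
  · intro u
    refine Quotient.inductionOn' u fun x => ?_
    show Submodule.Quotient.mk (b x x) = (0 : L ⧸ N)
    rw [alt]; rfl
  · intro u v w
    refine Quotient.inductionOn' u fun x => Quotient.inductionOn' v fun y =>
      Quotient.inductionOn' w fun z => ?_
    show Submodule.Quotient.mk (b x (b y z)) + Submodule.Quotient.mk (b y (b z x))
        + Submodule.Quotient.mk (b z (b x y)) = (0 : L ⧸ N)
    rw [← Submodule.Quotient.mk_add, ← Submodule.Quotient.mk_add]
    exact (Submodule.Quotient.mk_eq_zero N).2 (N_jac x y z)
  · intro x; rfl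
  · intro u v
    refine Quotient.inductionOn' u fun x => Quotient.inductionOn' v fun y => ?_
    show ρ (b x y) = ⁅ρ x, ρ y⁆
    exact anchor_bracket x y
  · intro u v a
    refine Quotient.inductionOn' u fun x => Quotient.inductionOn' v fun y => ?_
    show Submodule.Quotient.mk (b x (a • y)) =
      a • Submodule.Quotient.mk (b x y) + (ρ x a) • Submodule.Quotient.mk y
    rw [leibniz, Submodule.Quotient.mk_add]
    rfl
end
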